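/- Let p > 0, ν > 0, κ > 0, M = ν²/(4κ), β ∈ [0, 1), and for each α > 0 let x_{α,β} be the unique positive solution of g_α(x) = β. Then as α → ∞: (i) if M < 1/(1−β), then x_{α,β}/α² → 1/(M(1−β)) − 1; (ii) if M = 1/(1−β), then x_{α,β}/α → (2/ν)·√(p/(1−β)); (iii) if M > 1/(1−β), then x_{α,β} → (4p/ν²)·M/((1−β)M − 1). -/

import Mathlib

/-!
Clearing denominators, `g_α(x) = β` becomes the quadratic
`(1 - β) x² + ((1 - β - 1/M) α² - 4p/ν²) x = (4p/ν²) α²`, whose positive root is explicit.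
Rescaling `x` by `α²`, `α` or `1` according to the sign of `1 - β - 1/M` turns it into a quadratic
`a y² + b y = e` whose coefficients converge as `α → ∞`, and the positive root converges with them:
through `(√(b² + 4ae) - b) / (2a)` when the limiting `a` is nonzero, and through the rationalised
form `2e / (b + √(b² + 4ae))` when the limiting `a` vanishes.
-/

open Filter Topology

/-- The function `g_α` arising in the spectral analysis of the linearized order-parameter
system. -/
noncomputable def gfun (p ν κ α x : ℝ) : ℝ :=
  1 - (4 / (ν ^ 2 * x)) * (p + κ * x / (x / α ^ 2 + 1))

lemma quadratic_of_gfun_eq {p ν κ α x β : ℝ} (hν : ν ≠ 0) (hα : α ≠ 0) (hx : 0 < x)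
    (h : gfun p ν κ α x = β) :
    (1 - β) * x ^ 2 + ((1 - β - 4 * κ / ν ^ 2) * α ^ 2 - 4 * p / ν ^ 2) * x =
      4 * p / ν ^ 2 * α ^ 2 := by
  have hden : x / α ^ 2 + 1 ≠ 0 := by positivity
  unfold gfun at h
  field_simp at h ⊢
  linear_combination h

lemma eq_sqrt_sub_div_of_quadratic {a b e y : ℝ} (ha : 0 < a) (he : 0 ≤ e) (hy : 0 < y)
    (h : a * y ^ 2 + b * y = e) : y = (√(b ^ 2 + 4 * a * e) - b) / (2 * a) := by
  have habs : |2 * a * y + b| = √(b ^ 2 + 4 * a * e) := by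
    rw [← Real.sqrt_sq_eq_abs, ← h]; ring_nf
  have hb : -b ≤ √(b ^ 2 + 4 * a * e) :=
    (neg_le_abs b).trans (by rw [← Real.sqrt_sq_eq_abs]; gcongr; nlinarith)
  have hpos : 0 ≤ 2 * a * y + b := by
    by_contra! hneg
    rw [abs_of_neg hneg] at habs
    nlinarith [mul_pos ha hy]
  rw [← habs, abs_of_nonneg hpos]
  field_simp
  ring

lemma eq_div_add_sqrt_of_quadratic {a b e y : ℝ} (ha : 0 < a) (he : 0 ≤ e) (hy : 0 < y)
    (h : a * y ^ 2 + b * y = e) (hb : b + √(b ^ 2 + 4 * a * e) ≠ 0) :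
    y = 2 * e / (b + √(b ^ 2 + 4 * a * e)) := by
  rw [eq_sqrt_sub_div_of_quadratic ha he hy h, div_eq_div_iff (by positivity) hb]
  linear_combination Real.sq_sqrt (by positivity : 0 ≤ b ^ 2 + 4 * a * e)

section QuadraticLimits

variable {ι : Type*} {l : Filter ι} {a b e y : ι → ℝ} {a₀ b₀ e₀ : ℝ}

lemma tendsto_of_quadratic_of_ne_zero (ha : Tendsto a l (𝓝 a₀)) (hb : Tendsto b l (𝓝 b₀))
    (he : Tendsto e l (𝓝 e₀)) (ha₀ : a₀ ≠ 0)
    (hy : ∀ᶠ i in l, 0 < a i ∧ 0 ≤ e i ∧ 0 < y i ∧ a i * y i ^ 2 + b i * y i = e i) :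
    Tendsto y l (𝓝 ((√(b₀ ^ 2 + 4 * a₀ * e₀) - b₀) / (2 * a₀))) := by
  have hroot := (((hb.pow 2).add ((ha.const_mul 4).mul he)).sqrt.sub hb).div
    (ha.const_mul 2) (mul_ne_zero two_ne_zero ha₀)
  refine hroot.congr' ?_
  filter_upwards [hy] with i ⟨hai, hei, hyi, hi⟩
  exact (eq_sqrt_sub_div_of_quadratic hai hei hyi hi).symm

lemma tendsto_of_quadratic_of_add_sqrt_ne_zero (ha : Tendsto a l (𝓝 a₀))
    (hb : Tendsto b l (𝓝 b₀)) (he : Tendsto e l (𝓝 e₀)) (h₀ : b₀ + √(b₀ ^ 2 + 4 * a₀ * e₀) ≠ 0)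
    (hy : ∀ᶠ i in l, 0 < a i ∧ 0 ≤ e i ∧ 0 < y i ∧ a i * y i ^ 2 + b i * y i = e i) :
    Tendsto y l (𝓝 (2 * e₀ / (b₀ + √(b₀ ^ 2 + 4 * a₀ * e₀)))) := by
  have hden := hb.add ((hb.pow 2).add ((ha.const_mul 4).mul he)).sqrt
  refine ((he.const_mul 2).div hden h₀).congr' ?_
  filter_upwards [hy, hden.eventually_ne h₀] with i ⟨hai, hei, hyi, hi⟩ hne
  exact (eq_div_add_sqrt_of_quadratic hai hei hyi hi hne).symm

end QuadraticLimits

section QuadraticFamily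

variable {c d A : ℝ} {X : ℝ → ℝ}

lemma tendsto_div_sq_of_quadratic_family_of_neg (hc : 0 < c) (hA : 0 ≤ A)
    (hX : ∀ α > 0, 0 < X α ∧ c * X α ^ 2 + (d * α ^ 2 - A) * X α = A * α ^ 2) (hd : d < 0) :
    Tendsto (fun α => X α / α ^ 2) atTop (𝓝 (-d / c)) := by
  have hA₀ : Tendsto (fun α : ℝ => A / α ^ 2) atTop (𝓝 0) :=
    tendsto_const_nhds.div_atTop (tendsto_pow_atTop two_ne_zero)
  have hlim := tendsto_of_quadratic_of_ne_zero (y := fun α => X α / α ^ 2) tendsto_const_nhds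
    ((tendsto_const_nhds (x := d)).sub hA₀) hA₀ hc.ne' ?_
  · convert hlim using 2
    rw [sub_zero, mul_zero, add_zero, Real.sqrt_sq_eq_abs, abs_of_neg hd]
    field_simp
    ring
  filter_upwards [eventually_gt_atTop 0] with α hα
  obtain ⟨hx, hq⟩ := hX α hα
  refine ⟨hc, by positivity, by positivity, ?_⟩
  field_simp
  linear_combination hq

lemma tendsto_div_of_quadratic_family_of_eq_zero (hc : 0 < c) (hA : 0 ≤ A)
    (hX : ∀ α > 0, 0 < X α ∧ c * X α ^ 2 + (d * α ^ 2 - A) * X α = A * α ^ 2) (hd : d = 0) :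
    Tendsto (fun α => X α / α) atTop (𝓝 √(A / c)) := by
  have hA₀ : Tendsto (fun α : ℝ => -(A / α)) atTop (𝓝 (-0)) :=
    (tendsto_const_nhds.div_atTop tendsto_id).neg
  have hlim := tendsto_of_quadratic_of_ne_zero (y := fun α => X α / α) tendsto_const_nhds hA₀
    (tendsto_const_nhds (x := A)) hc.ne' ?_
  · convert hlim using 2
    rw [neg_zero, sub_zero, zero_pow two_ne_zero, zero_add,
      show 4 * c * A = (2 * c) ^ 2 * (A / c) by field_simp; ring,
      Real.sqrt_mul (by positivity), Real.sqrt_sq (by positivity)]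
    field_simp
  filter_upwards [eventually_gt_atTop 0] with α hα
  obtain ⟨hx, hq⟩ := hX α hα
  refine ⟨hc, hA, by positivity, ?_⟩
  subst hd
  field_simp
  linear_combination hq

lemma tendsto_of_quadratic_family_of_pos (hc : 0 < c) (hA : 0 ≤ A)
    (hX : ∀ α > 0, 0 < X α ∧ c * X α ^ 2 + (d * α ^ 2 - A) * X α = A * α ^ 2) (hd : 0 < d) :
    Tendsto X atTop (𝓝 (A / d)) := by
  have hsq : Tendsto (fun α : ℝ => α ^ 2) atTop atTop := tendsto_pow_atTop two_ne_zero
  have hlim := tendsto_of_quadratic_of_add_sqrt_ne_zero (y := X)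
    ((tendsto_const_nhds (x := c)).div_atTop hsq)
    ((tendsto_const_nhds (x := d)).sub ((tendsto_const_nhds (x := A)).div_atTop hsq))
    (tendsto_const_nhds (x := A)) ?_ ?_
  · convert hlim using 2
    rw [sub_zero, mul_zero, zero_mul, add_zero, Real.sqrt_sq hd.le]
    field_simp
    ring
  · rw [sub_zero, mul_zero, zero_mul, add_zero, Real.sqrt_sq hd.le]
    positivity
  filter_upwards [eventually_gt_atTop 0] with α hα
  obtain ⟨hx, hq⟩ := hX α hα
  refine ⟨by positivity, hA, hx, ?_⟩
  field_simp
  linear_combination hq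

end QuadraticFamily

theorem gfun_solution_asymptotics (p ν κ : ℝ) (hp : 0 < p) (hν : 0 < ν) (hκ : 0 < κ)
    (M : ℝ) (hM : M = ν ^ 2 / (4 * κ))
    (β : ℝ) (hβ : β ∈ Set.Ico (0:ℝ) 1)
    (X : ℝ → ℝ)
    (hX : ∀ α > 0, 0 < X α ∧ gfun p ν κ α (X α) = β) :
    (M < 1 / (1 - β) →
      Tendsto (fun α => X α / α ^ 2) atTop (nhds (1 / (M * (1 - β)) - 1))) ∧
    (M = 1 / (1 - β) →
      Tendsto (fun α => X α / α) atTop (nhds ((2 / ν) * Real.sqrt (p / (1 - β))))) ∧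
    (1 / (1 - β) < M →
      Tendsto X atTop (nhds ((4 * p / ν ^ 2) * (M / ((1 - β) * M - 1))))) := by
  have hc : 0 < 1 - β := sub_pos.2 hβ.2
  have hM₀ : 0 < M := hM ▸ by positivity
  have hA : 0 ≤ 4 * p / ν ^ 2 := by positivity
  have hquad : ∀ α > 0, 0 < X α ∧ (1 - β) * X α ^ 2 +
      ((1 - β - 1 / M) * α ^ 2 - 4 * p / ν ^ 2) * X α = 4 * p / ν ^ 2 * α ^ 2 := fun α hα =>
    ⟨(hX α hα).1, by
      rw [hM, one_div_div]; exact quadratic_of_gfun_eq hν.ne' hα.ne' (hX α hα).1 (hX α hα).2⟩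
  refine ⟨fun h => ?_, fun h => ?_, fun h => ?_⟩
  · have hd : 1 - β - 1 / M < 0 := by
      rw [lt_div_iff₀ hc] at h; rw [sub_neg, lt_div_iff₀ hM₀]; linarith
    convert tendsto_div_sq_of_quadratic_family_of_neg hc hA hquad hd using 2
    field_simp
    ring
  · have hd : 1 - β - 1 / M = 0 := by rw [h, one_div_one_div, sub_self]
    convert tendsto_div_of_quadratic_family_of_eq_zero hc hA hquad hd using 2
    rw [show 4 * p / ν ^ 2 / (1 - β) = (2 / ν) ^ 2 * (p / (1 - β)) by ring,
      Real.sqrt_mul (by positivity), Real.sqrt_sq (by positivity)]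
  · have hd : 0 < 1 - β - 1 / M := by
      rw [div_lt_iff₀ hc] at h; rw [sub_pos, div_lt_iff₀ hM₀]; linarith
    convert tendsto_of_quadratic_family_of_pos hc hA hquad hd using 2
    field_simp
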